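/- arXiv:math/0603549 — 6 statements merged into one kernel-verified Lean document; each statement's English description precedes it below -/
import Mathlib

section
/- Let f : ℝ → ℝ, let α, β > 0, and let ω, ζ, c ∈ ℝ with ω < c and ζ < c. Suppose the (β,ζ)-derivative of f at c exists and equals L, i.e. (f(x) − f(c))/((x − ζ)^β − (c − ζ)^β) tends to L as x tends to c along the punctured neighborhood filter 𝓝[≠] c. Then the (α,ω)-derivative of f at c exists and equals (β/α) · (c − ζ)^(β−1)/(c − ω)^(α−1) · L, i.e. (f(x) − f(c))/((x − ω)^α − (c − ω)^α) tends to (β/α) · (c − ζ)^(β−1)/(c − ω)^(α−1) · L along 𝓝[≠] c. -/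
open Filter Topology

theorem Filter.Tendsto.div_sub_of_hasDerivAt {𝕜 : Type*} [NontriviallyNormedField 𝕜]
    {f g₁ g₂ : 𝕜 → 𝕜} {c d₁ d₂ L : 𝕜} (h₁ : HasDerivAt g₁ d₁ c) (h₂ : HasDerivAt g₂ d₂ c)
    (hd₁ : d₁ ≠ 0) (hd₂ : d₂ ≠ 0)
    (h : Tendsto (fun x => (f x - f c) / (g₁ x - g₁ c)) (𝓝[≠] c) (𝓝 L)) :
    Tendsto (fun x => (f x - f c) / (g₂ x - g₂ c)) (𝓝[≠] c) (𝓝 (d₁ / d₂ * L)) := by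
  have hslopes : Tendsto (fun x => slope g₁ c x / slope g₂ c x * ((f x - f c) / (g₁ x - g₁ c)))
      (𝓝[≠] c) (𝓝 (d₁ / d₂ * L)) :=
    (h₁.tendsto_slope.div h₂.tendsto_slope hd₂).mul h
  refine hslopes.congr' ?_
  -- `hd₁` keeps `g₁ x - g₁ c` away from zero, so the quotient in `h` is not a junk `_ / 0`.
  filter_upwards [self_mem_nhdsWithin, h₁.eventually_ne hd₁] with x (hx : x ≠ c) hg₁
  rw [slope_def_field, slope_def_field]
  field_simp [sub_ne_zero.2 hx, sub_ne_zero.2 hg₁]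

theorem alpha_omega_deriv_change (f : ℝ → ℝ) (α β ω ζ c L : ℝ)
    (hα : 0 < α) (hβ : 0 < β) (hωc : ω < c) (hζc : ζ < c)
    (h : Tendsto (fun x => (f x - f c) / ((x - ζ) ^ β - (c - ζ) ^ β))
      (𝓝[≠] c) (𝓝 L)) :
    Tendsto (fun x => (f x - f c) / ((x - ω) ^ α - (c - ω) ^ α))
      (𝓝[≠] c) (𝓝 (β / α * ((c - ζ) ^ (β - 1) / (c - ω) ^ (α - 1)) * L)) := by
  have hcω : 0 < c - ω := sub_pos.2 hωc
  have hcζ : 0 < c - ζ := sub_pos.2 hζc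
  have hω := ((hasDerivAt_id' c).sub_const ω).rpow_const (p := α) (.inl hcω.ne')
  have hζ := ((hasDerivAt_id' c).sub_const ζ).rpow_const (p := β) (.inl hcζ.ne')
  convert h.div_sub_of_hasDerivAt hζ hω (by positivity) (by positivity) using 2
  ring
end

section
/- Let f : ℝ → ℝ, ω ∈ ℝ, and let α, β be real numbers with 0 < β < α. Suppose there exists L ∈ ℝ with L ≠ 0 such that (f(x) − f(ω))/(x − ω)^β tends to L as x tends to ω from the right (i.e. along the filter 𝓝[>] ω). Then there is no real number M such that (f(x) − f(ω))/(x − ω)^α tends to M as x tends to ω along 𝓝[>] ω. -/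
/-! To the right of `ω` the `β`-quotient is the `α`-quotient times `(x - ω) ^ (α - β)`, which tends
to `0`; so a finite limit of the `α`-quotient forces the `β`-quotient to tend to `0`, not to `L ≠ 0`. -/

open Filter Topology

theorem tendsto_sub_rpow_nhds_zero {γ : ℝ} (hγ : 0 < γ) (ω : ℝ) :
    Tendsto (fun x : ℝ => (x - ω) ^ γ) (𝓝 ω) (𝓝 0) := by
  have hsub : Tendsto (fun x : ℝ => x - ω) (𝓝 ω) (𝓝 0) := tendsto_sub_nhds_zero_iff.mpr le_rfl
  simpa only [Function.comp_def, Real.zero_rpow hγ.ne'] using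
    ((Real.continuousAt_rpow_const 0 γ (Or.inr hγ.le)).tendsto.comp hsub)

theorem div_sub_rpow_eventuallyEq_mul (g : ℝ → ℝ) (ω α β : ℝ) :
    (fun x => g x / (x - ω) ^ β) =ᶠ[𝓝[>] ω]
      fun x => g x / (x - ω) ^ α * (x - ω) ^ (α - β) := by
  filter_upwards [self_mem_nhdsWithin] with x hx
  have hpos : 0 < x - ω := sub_pos.mpr hx
  rw [Real.rpow_sub hpos, div_mul_div_cancel₀ (Real.rpow_pos_of_pos hpos α).ne']

theorem tendsto_div_sub_rpow_zero_of_lt {g : ℝ → ℝ} {ω α β M : ℝ} (hβα : β < α)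
    (hM : Tendsto (fun x => g x / (x - ω) ^ α) (𝓝[>] ω) (𝓝 M)) :
    Tendsto (fun x => g x / (x - ω) ^ β) (𝓝[>] ω) (𝓝 0) := by
  have hprod := hM.mul
    ((tendsto_sub_rpow_nhds_zero (sub_pos.mpr hβα) ω).mono_left nhdsWithin_le_nhds)
  rw [mul_zero] at hprod
  exact hprod.congr' (div_sub_rpow_eventuallyEq_mul g ω α β).symm

theorem alpha_omega_deriv_at_omega_gt_general (f : ℝ → ℝ) (ω α β L : ℝ)
    (hβα : β < α) (hL : L ≠ 0)
    (h : Tendsto (fun x => (f x - f ω) / (x - ω) ^ β) (𝓝[>] ω) (𝓝 L)) :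
    ¬ ∃ M : ℝ, Tendsto (fun x => (f x - f ω) / (x - ω) ^ α) (𝓝[>] ω) (𝓝 M) := by
  rintro ⟨M, hM⟩
  exact hL (tendsto_nhds_unique h (tendsto_div_sub_rpow_zero_of_lt hβα hM))

theorem alpha_omega_deriv_at_omega_gt (f : ℝ → ℝ) (ω α β L : ℝ)
    (hβ : 0 < β) (hβα : β < α) (hL : L ≠ 0)
    (h : Tendsto (fun x => (f x - f ω) / (x - ω) ^ β) (𝓝[>] ω) (𝓝 L)) :
    ¬ ∃ M : ℝ, Tendsto (fun x => (f x - f ω) / (x - ω) ^ α) (𝓝[>] ω) (𝓝 M) :=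
  alpha_omega_deriv_at_omega_gt_general f ω α β L hβα hL h
end

section
/- Let f : ℝ → ℝ, α > 0, and ω, x ∈ ℝ with ω < x. If f has derivative f'(x) at x (in the sense of HasDerivAt), then the (α,ω)-derivative of f at x exists and equals (1/α)·(x − ω)^(1−α)·f'(x); that is, (f(y) − f(x))/((y − ω)^α − (x − ω)^α) tends to (1/α)·(x − ω)^(1−α)·f'(x) as y tends to x along the punctured neighborhood filter 𝓝[≠] x. -/
open Filter Topology

theorem alpha_omega_deriv_of_hasDerivAt (f : ℝ → ℝ) (f' α ω x : ℝ)
    (hα : 0 < α) (hωx : ω < x) (hf : HasDerivAt f f' x) :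
    Tendsto (fun y => (f y - f x) / ((y - ω) ^ α - (x - ω) ^ α))
      (𝓝[≠] x) (𝓝 (1 / α * (x - ω) ^ (1 - α) * f')) := by
  have hxω : (0:ℝ) < x - ω := by linarith
  set g : ℝ → ℝ := fun y => (y - ω) ^ α with hg
  have hg' : HasDerivAt g (α * (x - ω) ^ (α - 1) * 1) x := by
    exact (Real.hasDerivAt_rpow_const (p := α) (Or.inl hxω.ne')).comp x
      ((hasDerivAt_id x).sub_const ω)
  have hg'ne : α * (x - ω) ^ (α - 1) * 1 ≠ 0 := by
    have := Real.rpow_pos_of_pos hxω (α - 1)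
    positivity
  have hsf := hasDerivAt_iff_tendsto_slope.mp hf
  have hsg := hasDerivAt_iff_tendsto_slope.mp hg'
  have hdiv := hsf.div hsg hg'ne
  have heq : (fun y => slope f x y / slope g x y) =ᶠ[𝓝[≠] x]
      (fun y => (f y - f x) / ((y - ω) ^ α - (x - ω) ^ α)) := by
    filter_upwards [self_mem_nhdsWithin] with y hy
    have hyx : y - x ≠ 0 := sub_ne_zero.mpr hy
    simp only [slope_def_field, hg]
    rw [div_div_div_cancel_right₀ hyx]
  have hlim : f' / (α * (x - ω) ^ (α - 1) * 1) = 1 / α * (x - ω) ^ (1 - α) * f' := by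
    rw [mul_one, show (1 - α) = -(α - 1) by ring, Real.rpow_neg hxω.le]
    field_simp
  rw [← hlim]
  exact hdiv.congr' heq
end

section
/- Let p be a real number, α > 0, and a, ω, x ∈ ℝ with ω < x and a < x. Then the (α,ω)-derivative of the function t ↦ (t − a)^p at x exists and equals (p/α)·(x − ω)^(1−α)·(x − a)^(p−1); that is, ((y − a)^p − (x − a)^p)/((y − ω)^α − (x − ω)^α) tends to (p/α)·(x − ω)^(1−α)·(x − a)^(p−1) as y tends to x along the punctured neighborhood filter 𝓝[≠] x. -/
/-!
Both numerator and denominator are increments of functions differentiable at `x`, so their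
quotient is the quotient of two difference quotients and tends to the quotient of the
derivatives `p (x - a)^(p-1)` and `α (x - ω)^(α-1)`; the latter is nonzero because `ω < x`.
-/

open Filter Topology

theorem HasDerivAt.tendsto_sub_div_sub {𝕜 : Type*} [NontriviallyNormedField 𝕜]
    {f g : 𝕜 → 𝕜} {f' g' x : 𝕜} (hf : HasDerivAt f f' x) (hg : HasDerivAt g g' x)
    (hg' : g' ≠ 0) :
    Tendsto (fun y => (f y - f x) / (g y - g x)) (𝓝[≠] x) (𝓝 (f' / g')) := by
  have hslopes := (hasDerivAt_iff_tendsto_slope.mp hf).div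
    (hasDerivAt_iff_tendsto_slope.mp hg) hg'
  refine hslopes.congr' (eventually_nhdsWithin_of_forall fun y hy => ?_)
  have hyx : y - x ≠ 0 := sub_ne_zero.mpr hy
  rw [Pi.div_apply, slope_def_field, slope_def_field]
  field_simp

theorem hasDerivAt_sub_const_rpow {p a x : ℝ} (hax : a < x) :
    HasDerivAt (fun y => (y - a) ^ p) (p * (x - a) ^ (p - 1)) x := by
  simpa using ((hasDerivAt_id x).sub_const a).rpow_const (p := p) (Or.inl (sub_pos.mpr hax).ne')

theorem alpha_omega_deriv_rpow (p α a ω x : ℝ)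
    (hα : 0 < α) (hωx : ω < x) (hax : a < x) :
    Tendsto (fun y => ((y - a) ^ p - (x - a) ^ p) / ((y - ω) ^ α - (x - ω) ^ α))
      (𝓝[≠] x) (𝓝 (p / α * (x - ω) ^ (1 - α) * (x - a) ^ (p - 1))) := by
  have hxω : 0 < x - ω := sub_pos.mpr hωx
  have hg' : α * (x - ω) ^ (α - 1) ≠ 0 := by positivity
  convert (hasDerivAt_sub_const_rpow hax).tendsto_sub_div_sub
    (hasDerivAt_sub_const_rpow hωx) hg' using 2
  rw [show 1 - α = -(α - 1) by ring, Real.rpow_neg hxω.le]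
  field_simp
end

section
/- Define g : ℕ → ℝ → ℝ by g k x = (−1)^(k/2)·sin(√x) if k is even and g k x = (−1)^((k−1)/2)·cos(√x) if k is odd (√ is Real.sqrt). Then for every k ∈ ℕ and every x > 0, the (1/2,0)-derivative of g k at x exists and equals g (k+1) x; that is, (g k y − g k x)/(√y − √x) tends to g (k+1) x as y tends to x along the punctured neighborhood filter 𝓝[≠] x. In particular, the k-th iterated (1/2,0)-derivative of sin(√x) equals g k x for all x > 0. -/
open Filter Topology

/-- The iterated (1/2,0)-derivatives of `sin (√x)`:
`g k x = (-1)^(k/2) * sin (√x)` for even `k`, and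
`g k x = (-1)^((k-1)/2) * cos (√x)` for odd `k`. -/
noncomputable def g (k : ℕ) (x : ℝ) : ℝ :=
  if Even k then (-1 : ℝ) ^ (k / 2) * Real.sin (Real.sqrt x)
  else (-1 : ℝ) ^ ((k - 1) / 2) * Real.cos (Real.sqrt x)

theorem half_deriv_iterate_sin_sqrt (k : ℕ) (x : ℝ) (hx : 0 < x) :
    Tendsto (fun y => (g k y - g k x) / (Real.sqrt y - Real.sqrt x))
      (𝓝[≠] x) (𝓝 (g (k + 1) x)) := by
  have hs : Tendsto Real.sqrt (𝓝[≠] x) (𝓝[≠] Real.sqrt x) := by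
    rw [tendsto_nhdsWithin_iff]
    refine ⟨(Real.continuous_sqrt.tendsto x).mono_left nhdsWithin_le_nhds, ?_⟩
    filter_upwards [self_mem_nhdsWithin,
      (eventually_gt_nhds hx).filter_mono nhdsWithin_le_nhds] with y hy hy0
    exact fun h => hy ((Real.sqrt_inj hy0.le hx.le).mp h)
  rcases Nat.even_or_odd k with he | ho
  · have hF : HasDerivAt (fun u => (-1:ℝ)^(k/2) * Real.sin u)
        ((-1:ℝ)^(k/2) * Real.cos (Real.sqrt x)) (Real.sqrt x) :=
      (Real.hasDerivAt_sin _).const_mul _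
    have h2 := (hasDerivAt_iff_tendsto_slope.mp hF).comp hs
    have hval : g (k+1) x = (-1:ℝ)^(k/2) * Real.cos (Real.sqrt x) := by
      simp [g, Nat.even_add_one, he, Nat.not_even_iff_odd]
    rw [hval]
    refine h2.congr fun y => ?_
    simp [g, he, slope_def_field, Function.comp]
  · obtain ⟨m, rfl⟩ := ho
    have hF : HasDerivAt (fun u => (-1:ℝ)^m * Real.cos u)
        ((-1:ℝ)^m * (-Real.sin (Real.sqrt x))) (Real.sqrt x) :=
      (Real.hasDerivAt_cos _).const_mul _
    have h2 := (hasDerivAt_iff_tendsto_slope.mp hF).comp hs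
    have hval : g (2*m+1+1) x = (-1:ℝ)^m * (-Real.sin (Real.sqrt x)) := by
      have h1 : (2*m+1+1)/2 = m + 1 := by omega
      have : Even (2*m+1+1) := by exact ⟨m+1, by ring⟩
      simp [g, this, h1, pow_succ]
    rw [hval]
    refine h2.congr fun y => ?_
    have hk : ¬ Even (2*m+1) := by simp [Nat.even_add_one]
    have h1 : (2*m+1-1)/2 = m := by omega
    simp [g, hk, h1, slope_def_field, Function.comp]
end

section
/- Define g : ℕ → ℝ → ℝ by g k x = (−1)^(k/2)·sin(√x) if k is even and g k x = (−1)^((k−1)/2)·cos(√x) if k is odd (√ is Real.sqrt). Then for every k ∈ ℕ, the right-hand (1/2,0)-derivative of g k at 0 exists and equals g (k+1) 0; that is, (g k x − g k 0)/√x tends to g (k+1) 0 as x tends to 0 from the right, along the filter 𝓝[>] 0. Consequently, the k-th iterated (1/2,0)-derivative of sin(√x) at 0 equals 0 when k is even (k ≥ 2) and equals (−1)^((k−1)/2) when k is odd. -/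
open Filter Topology

lemma sqrt_tendsto : Tendsto Real.sqrt (𝓝[>] (0 : ℝ)) (𝓝[>] (0 : ℝ)) := by
  apply tendsto_nhdsWithin_of_tendsto_nhds_of_eventually_within
  · have : Tendsto Real.sqrt (𝓝 0) (𝓝 (Real.sqrt 0)) :=
      Real.continuous_sqrt.continuousAt
    simpa using this.mono_left nhdsWithin_le_nhds
  · filter_upwards [self_mem_nhdsWithin] with x hx
    exact Real.sqrt_pos.2 hx

lemma sin_lim : Tendsto (fun t : ℝ => Real.sin t / t) (𝓝[>] (0 : ℝ)) (𝓝 1) := by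
  have h := (Real.hasDerivAt_sin 0).tendsto_slope_zero_right
  simpa [slope_fun_def, div_eq_inv_mul] using h

lemma cos_lim : Tendsto (fun t : ℝ => (Real.cos t - 1) / t) (𝓝[>] (0 : ℝ)) (𝓝 0) := by
  have h := (Real.hasDerivAt_cos 0).tendsto_slope_zero_right
  simpa [slope_fun_def, div_eq_inv_mul] using h

theorem half_deriv_iterate_sin_sqrt_at_zero :
    (∀ k : ℕ, Tendsto (fun x => (g k x - g k 0) / Real.sqrt x)
      (𝓝[>] (0 : ℝ)) (𝓝 (g (k + 1) 0))) ∧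
    (∀ k : ℕ, Even k → 2 ≤ k → g k 0 = 0) ∧
    (∀ k : ℕ, Odd k → g k 0 = (-1 : ℝ) ^ ((k - 1) / 2)) := by
  refine ⟨fun k => ?_, fun k hk _ => by simp [g, hk], fun k hk => by
    simp [g, Nat.odd_iff.1 hk, Nat.not_even_iff.2 (Nat.odd_iff.1 hk)]⟩
  rcases Nat.even_or_odd k with hk | hk
  · have hne : ¬ Even (k + 1) := by simp [Nat.even_add_one, hk]
    have : g (k + 1) 0 = (-1 : ℝ) ^ (k / 2) := by
      simp [g, hne]
    rw [this]
    have h1 : Tendsto (fun x : ℝ => (-1 : ℝ) ^ (k / 2) * (Real.sin (Real.sqrt x) / Real.sqrt x))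
        (𝓝[>] (0 : ℝ)) (𝓝 ((-1 : ℝ) ^ (k / 2) * 1)) :=
      ((sin_lim.comp sqrt_tendsto)).const_mul _
    simp only [mul_one] at h1
    refine h1.congr (fun x => ?_)
    simp [g, hk, mul_div_assoc]
  · have he : Even (k + 1) := Nat.even_add_one.2 (Nat.not_even_iff_odd.symm.1 hk)
    have hodd := Nat.odd_iff.1 hk
    have : g (k + 1) 0 = 0 := by simp [g, he]
    rw [this]
    have h1 : Tendsto (fun x : ℝ => (-1 : ℝ) ^ ((k - 1) / 2) *
        ((Real.cos (Real.sqrt x) - 1) / Real.sqrt x))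
        (𝓝[>] (0 : ℝ)) (𝓝 ((-1 : ℝ) ^ ((k - 1) / 2) * 0)) :=
      ((cos_lim.comp sqrt_tendsto)).const_mul _
    simp only [mul_zero] at h1
    refine h1.congr (fun x => ?_)
    simp only [g, if_neg (Nat.not_even_iff.2 hodd), Real.sqrt_zero, Real.cos_zero, mul_one]; ring
end
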